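/- For every integer n ≥ 2, if U is an independent generating set of A^+(B_n), then: (1) U contains no singleton support element, i.e. A^+(B_n)_1 ∩ U = ∅; (2) U contains exactly n·(n!) elements of n-support, i.e. |A^+(B_n)_n ∩ U| = n·(n!); (3) the number of full support elements of U satisfies n ≤ |A^+(B_n)_{n²+1} ∩ U| ≤ 2n − 2. Consequently |U| ≤ n·(n!) + 2n − 2. -/

import Mathlib

/-- The Brandt semigroup `B_n`, modeled as `Option (Fin n × Fin n)` where
`none` plays the role of the (two-sided) zero element `ϑ`. -/
def Brandt (n : ℕ) : Type := Option (Fin n × Fin n)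

instance (n : ℕ) : DecidableEq (Brandt n) :=
  inferInstanceAs (DecidableEq (Option (Fin n × Fin n)))

instance (n : ℕ) : Fintype (Brandt n) :=
  inferInstanceAs (Fintype (Option (Fin n × Fin n)))

namespace Brandt

/-- The zero element `ϑ` of `B_n`. -/
def theta (n : ℕ) : Brandt n := none

/-- The element `(i, j)` of `B_n`. -/
def pair {n : ℕ} (i j : Fin n) : Brandt n := some (i, j)

/-- The addition of the Brandt semigroup:
`(i,j) + (k,l) = (i,l)` if `j = k` and `ϑ` otherwise; `ϑ` is absorbing. -/
def add {n : ℕ} : Option (Fin n × Fin n) → Option (Fin n × Fin n) → Option (Fin n × Fin n)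
  | some (i, j), some (k, l) => if j = k then some (i, l) else none
  | _, _ => none

instance (n : ℕ) : Add (Brandt n) := ⟨fun a b => Brandt.add a b⟩

end Brandt

/-- `M(B_n)`: all self-maps of `B_n`, with pointwise addition. -/
abbrev MB (n : ℕ) := Brandt n → Brandt n

/-- `g` is an endomorphism of `(B_n, +)`. -/
def IsEndo {n : ℕ} (g : MB n) : Prop := ∀ a b : Brandt n, g (a + b) = g a + g b

/-- `g` is an automorphism of `(B_n, +)`. -/
def IsAuto {n : ℕ} (g : MB n) : Prop := IsEndo g ∧ Function.Bijective g

/-- The constant map `ξ_c` on `B_n` with value `c`. -/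
def xi {n : ℕ} (c : Brandt n) : MB n := fun _ => c

/-- `C_{B_n}`, the set of all constant maps on `B_n`. -/
def ConstMaps (n : ℕ) : Set (MB n) := {f | ∃ c : Brandt n, f = xi c}

/-- `f` is an affine map: a sum of an endomorphism and a constant map. -/
def IsAffine {n : ℕ} (f : MB n) : Prop := ∃ g c, IsEndo g ∧ f = g + xi c

/-- `A^+(B_n)`: the subsemigroup of `(M(B_n), +)` generated by the affine maps. -/
def Aplus (n : ℕ) : AddSubsemigroup (MB n) := AddSubsemigroup.closure {f | IsAffine f}

/-- `A^+(B_n)` as a set of maps. -/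
def AplusSet (n : ℕ) : Set (MB n) := (Aplus n : Set (MB n))

/-- The support of `f`: the set of elements not mapped to `ϑ`. -/
def supp {n : ℕ} (f : MB n) : Set (Brandt n) := {a | f a ≠ Brandt.theta n}

/-- `X_k`: the set of `k`-support elements of `X`. -/
def supportPart {n : ℕ} (X : Set (MB n)) (k : ℕ) : Set (MB n) :=
  {f ∈ X | (supp f).ncard = k}

/-- A subset `U` of an additive semigroup is independent if no element of `U`
lies in the subsemigroup generated by the remaining elements of `U`. -/
def IndepSet {β : Type*} [Add β] (U : Set β) : Prop :=
  ∀ a ∈ U, a ∉ AddSubsemigroup.closure (U \ {a})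

/-- The `n`-support map `(p, q; σ)`, sending `(i, p)` to `(iσ, q)` and
everything else to `ϑ`. -/
def nMap {n : ℕ} (p q : Fin n) (σ : Equiv.Perm (Fin n)) : MB n := fun a =>
  Option.elim (α := Fin n × Fin n) a (Brandt.theta n)
    (fun x => if x.2 = p then Brandt.pair (σ x.1) q else Brandt.theta n)

/-- The singleton support map `⟨(k, l), α⟩`, sending `(k, l)` to `α` and
everything else to `ϑ`. -/
def sMap {n : ℕ} (k l : Fin n) (α : Brandt n) : MB n :=
  fun a => if a = Brandt.pair k l then α else Brandt.theta n

/-- The set `S = {ξ_(i, i+1) : i ∈ [n-1]} ∪ {ξ_(n, 1)}`, i.e. the constant maps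
`ξ_(i, i+1)` where the successor is taken cyclically in `[n]`. -/
def setS (n : ℕ) : Set (MB n) := {f | ∃ i : Fin n, f = xi (Brandt.pair i (finRotate n i))}

/-- The set `T = {g + h : g ∈ Aut(B_n), h ∈ S}`. -/
def setT (n : ℕ) : Set (MB n) := {f | ∃ g h, IsAuto g ∧ h ∈ setS n ∧ f = g + h}

section Basics
open Brandt
variable {n : ℕ}

theorem theta_add (a : Brandt n) : theta n + a = theta n := rfl

theorem add_theta (a : Brandt n) : a + theta n = theta n := by
  show Brandt.add a none = none
  cases a with
  | none => rfl
  | some x => rfl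

theorem pair_add_pair (i j k l : Fin n) :
    pair i j + pair k l = if j = k then pair i l else theta n := rfl

theorem pair_ne_theta (i j : Fin n) : pair i j ≠ theta n := by
  simp [pair, theta]
  exact Option.some_ne_none _

theorem brandt_cases (a : Brandt n) : a = theta n ∨ ∃ i j, a = pair i j := by
  cases a with
  | none => exact Or.inl rfl
  | some x => exact Or.inr ⟨x.1, x.2, rfl⟩

theorem xi_apply (c : Brandt n) (a : Brandt n) : xi c a = c := rfl

theorem mb_add_apply (f g : MB n) (a : Brandt n) : (f + g) a = f a + g a := rfl

theorem xi_inj {c d : Brandt n} (h : xi c = xi d) : c = d := congrFun h (theta n)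

theorem xi_add_xi (c d : Brandt n) : xi c + xi d = xi (c + d) := rfl

theorem nMap_apply_theta (p q : Fin n) (σ : Equiv.Perm (Fin n)) :
    nMap p q σ (theta n) = theta n := rfl

theorem nMap_apply_pair (p q : Fin n) (σ : Equiv.Perm (Fin n)) (i j : Fin n) :
    nMap p q σ (pair i j) = if j = p then pair (σ i) q else theta n := rfl

theorem sMap_apply (k l : Fin n) (α : Brandt n) (a : Brandt n) :
    sMap k l α a = if a = pair k l then α else theta n := rfl

theorem pair_inj {i j k l : Fin n} (h : pair i j = pair (n := n) k l) : i = k ∧ j = l := by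
  have : (i,j) = (k,l) := by
    have h2 : (some (i,j) : Option (Fin n × Fin n)) = some (k,l) := h
    exact Option.some_injective _ h2
  exact ⟨congrArg Prod.fst this, congrArg Prod.snd this⟩

end Basics

section Affine
open Brandt
variable {n : ℕ}

theorem pair_add_pair_same (i j l : Fin n) : pair i j + pair j l = pair i l := by
  simp [pair_add_pair]

theorem affine_class (f : MB n) (hf : IsAffine f) :
    (∃ c, f = xi c) ∨ ∃ p q σ, f = nMap p q σ := by
  obtain ⟨g, c, hg, rfl⟩ := hf
  rcases brandt_cases (g (theta n)) with hθ | ⟨k, k', hθ⟩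
  · by_cases hz : ∃ x : Fin n × Fin n, g (pair x.1 x.2) = theta n
    · -- g vanishes everywhere
      obtain ⟨⟨i, j⟩, hij⟩ := hz
      have hrow : ∀ l, g (pair i l) = theta n := by
        intro l
        have h := hg (pair i j) (pair j l)
        rw [pair_add_pair_same, hij, theta_add] at h
        exact h
      have hall : ∀ k l, g (pair k l) = theta n := by
        intro k l
        have h := hg (pair k i) (pair i l)
        rw [pair_add_pair_same, hrow, add_theta] at h
        exact h
      left
      refine ⟨theta n, funext fun a => ?_⟩
      rcases brandt_cases a with rfl | ⟨x, y, rfl⟩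
      · show g (theta n) + c = theta n
        rw [hθ, theta_add]
      · show g (pair x y) + c = theta n
        rw [hall, theta_add]
    · push_neg at hz
      have hv : ∀ i j : Fin n, ∃ k l, g (pair i j) = pair k l := by
        intro i j
        rcases brandt_cases (g (pair i j)) with h | ⟨k, l, h⟩
        · exact absurd h (hz (i, j))
        · exact ⟨k, l, h⟩
      choose F1 F2 hF using hv
      have key : ∀ i j l : Fin n,
          F2 i j = F1 j l ∧ F1 i l = F1 i j ∧ F2 i l = F2 j l := by
        intro i j l
        have h := hg (pair i j) (pair j l)
        rw [pair_add_pair_same, hF, hF, hF, pair_add_pair] at h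
        by_cases he : F2 i j = F1 j l
        · rw [if_pos he] at h
          obtain ⟨h1, h2⟩ := pair_inj h
          exact ⟨he, h1, h2⟩
        · rw [if_neg he] at h
          exact absurd h (pair_ne_theta _ _)
      set s : Fin n → Fin n := fun i => F1 i i with hs
      have hF1 : ∀ i j, F1 i j = s i := by
        intro i j; exact (key i j i).2.1.symm
      have hF2 : ∀ i j, F2 i j = s j := by
        intro i j; exact (key i j j).1
      have hF' : ∀ i j, g (pair i j) = pair (s i) (s j) := by
        intro i j; rw [hF, hF1, hF2]
      have hinj : Function.Injective s := by
        intro a b hab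
        by_contra hne
        have h := hg (pair a b) (pair a b)
        have hab' : pair a b + pair (n := n) a b = theta n := by
          rw [pair_add_pair, if_neg (fun h => hne (h.symm))]
        rw [hab', hθ, hF', pair_add_pair, hab, if_pos rfl] at h
        exact pair_ne_theta _ _ h.symm
      let σ : Equiv.Perm (Fin n) := Equiv.ofBijective s (Finite.injective_iff_bijective.mp hinj)
      have hσ : ∀ i, σ i = s i := fun i => rfl
      rcases brandt_cases c with rfl | ⟨p, q, rfl⟩
      · left
        refine ⟨theta n, funext fun a => ?_⟩
        show g a + theta n = theta n
        rw [add_theta]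
      · right
        refine ⟨σ.symm p, q, σ, funext fun a => ?_⟩
        rcases brandt_cases a with rfl | ⟨x, y, rfl⟩
        · show g (theta n) + pair p q = _
          rw [hθ, theta_add, nMap_apply_theta]
        · show g (pair x y) + pair p q = _
          rw [hF', pair_add_pair, nMap_apply_pair]
          have hiff : (y = σ.symm p) ↔ (s y = p) := by
            rw [Equiv.eq_symm_apply, hσ]
          by_cases hc : s y = p
          · rw [if_pos hc, if_pos (hiff.mpr hc)]
            rfl
          · rw [if_neg hc, if_neg (fun h => hc (hiff.mp h))]
  · -- g (theta n) = pair k k', forces g constant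
    have hkk : k' = k := by
      have h := hg (theta n) (theta n)
      rw [theta_add, hθ, pair_add_pair] at h
      by_cases he : k' = k
      · exact he
      · rw [if_neg he] at h; exact absurd h (pair_ne_theta _ _)
    rw [hkk] at hθ
    have hall : ∀ a, g a = pair k k := by
      intro a
      have h := hg a (theta n)
      rw [add_theta, hθ] at h
      rcases brandt_cases (g a) with h2 | ⟨x, y, h2⟩
      · rw [h2, theta_add] at h; exact absurd h (pair_ne_theta _ _)
      · rw [h2, pair_add_pair] at h
        by_cases he : y = k
        · subst he
          rw [if_pos rfl] at h
          obtain ⟨h3, _⟩ := pair_inj h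
          rw [h2, ← h3]
        · rw [if_neg he] at h; exact absurd h (pair_ne_theta _ _)
    left
    refine ⟨pair k k + c, funext fun a => ?_⟩
    show g a + c = _
    rw [hall]
    rfl

end Affine

section Class
open Brandt
variable {n : ℕ}

/-- The classification predicate for elements of `A⁺(Bₙ)`. -/
def ClassP {n : ℕ} (f : MB n) : Prop :=
  (∃ c, f = xi c) ∨ (∃ p q σ, f = nMap p q σ) ∨ (∃ k l p q, f = sMap k l (pair p q))

theorem sMap_theta (k l : Fin n) : sMap k l (theta n) = xi (theta n) := by
  funext a
  show (if a = pair k l then theta n else theta n) = theta n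
  exact ite_self _

theorem classP_sMap (k l : Fin n) (v : Brandt n) : ClassP (sMap k l v) := by
  rcases brandt_cases v with rfl | ⟨p, q, rfl⟩
  · exact Or.inl ⟨theta n, (sMap_theta k l).symm ▸ rfl⟩
  · exact Or.inr (Or.inr ⟨k, l, p, q, rfl⟩)

theorem sMap_add (k l : Fin n) (α : Brandt n) (h : MB n) :
    sMap k l α + h = sMap k l (α + h (pair k l)) := by
  funext a
  show sMap k l α a + h a = _
  rw [sMap_apply, sMap_apply]
  by_cases ha : a = pair k l
  · rw [if_pos ha, if_pos ha, ha]
  · rw [if_neg ha, if_neg ha, theta_add]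

theorem add_sMap (h : MB n) (k l : Fin n) (α : Brandt n) :
    h + sMap k l α = sMap k l (h (pair k l) + α) := by
  funext a
  show h a + sMap k l α a = _
  rw [sMap_apply, sMap_apply]
  by_cases ha : a = pair k l
  · rw [if_pos ha, if_pos ha, ha]
  · rw [if_neg ha, if_neg ha, add_theta]

theorem xi_theta_add (h : MB n) : xi (theta n) + h = xi (theta n) :=
  funext fun a => theta_add (h a)

theorem add_xi_theta (h : MB n) : h + xi (theta n) = xi (theta n) :=
  funext fun a => add_theta (h a)

theorem xi_pair_add_nMap (k l p q : Fin n) (σ : Equiv.Perm (Fin n)) :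
    xi (pair k l) + nMap p q σ = sMap (σ.symm l) p (pair k q) := by
  funext a
  show pair k l + nMap p q σ a = sMap (σ.symm l) p (pair k q) a
  rcases brandt_cases a with rfl | ⟨i, j, rfl⟩
  · rw [nMap_apply_theta, add_theta, sMap_apply,
      if_neg (fun h : theta n = pair _ _ => pair_ne_theta _ _ h.symm)]
  · rw [nMap_apply_pair, sMap_apply]
    by_cases hj : j = p
    · rw [if_pos hj, pair_add_pair]
      by_cases hi : i = σ.symm l
      · have : l = σ i := by rw [hi, Equiv.apply_symm_apply]
        rw [if_pos this, if_pos (show pair i j = pair (σ.symm l) p by rw [hi, hj])]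
      · have hne : l ≠ σ i := fun h => hi (by rw [h, Equiv.symm_apply_apply])
        rw [if_neg hne, if_neg (fun h : pair i j = pair (σ.symm l) p => hi (pair_inj h).1)]
    · rw [if_neg hj, add_theta,
        if_neg (fun h : pair i j = pair (σ.symm l) p => hj (pair_inj h).2)]

theorem nMap_add_xi_pair_eq (p q l : Fin n) (σ : Equiv.Perm (Fin n)) :
    nMap p q σ + xi (pair q l) = nMap p l σ := by
  funext a
  show nMap p q σ a + pair q l = nMap p l σ a
  rcases brandt_cases a with rfl | ⟨i, j, rfl⟩
  · rw [nMap_apply_theta, nMap_apply_theta, theta_add]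
  · rw [nMap_apply_pair, nMap_apply_pair]
    by_cases hj : j = p
    · rw [if_pos hj, if_pos hj, pair_add_pair, if_pos rfl]
    · rw [if_neg hj, if_neg hj, theta_add]

theorem nMap_add_xi_pair_ne (p q k l : Fin n) (σ : Equiv.Perm (Fin n)) (hk : k ≠ q) :
    nMap p q σ + xi (pair k l) = xi (theta n) := by
  funext a
  show nMap p q σ a + pair k l = theta n
  rcases brandt_cases a with rfl | ⟨i, j, rfl⟩
  · rw [nMap_apply_theta, theta_add]
  · rw [nMap_apply_pair]
    by_cases hj : j = p
    · rw [if_pos hj, pair_add_pair, if_neg (fun h => hk h.symm)]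
    · rw [if_neg hj, theta_add]

theorem nMap_add_nMap_same (p q q' : Fin n) (σ σ' : Equiv.Perm (Fin n)) :
    nMap p q σ + nMap p q' σ' = sMap (σ'.symm q) p (pair (σ (σ'.symm q)) q') := by
  funext a
  show nMap p q σ a + nMap p q' σ' a = sMap _ _ _ a
  rcases brandt_cases a with rfl | ⟨i, j, rfl⟩
  · rw [nMap_apply_theta, theta_add, sMap_apply,
      if_neg (fun h : theta n = pair _ _ => pair_ne_theta _ _ h.symm)]
  · rw [nMap_apply_pair, nMap_apply_pair, sMap_apply]
    by_cases hj : j = p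
    · rw [if_pos hj, if_pos hj, pair_add_pair]
      by_cases hi : i = σ'.symm q
      · have : q = σ' i := by rw [hi, Equiv.apply_symm_apply]
        rw [if_pos this, if_pos (show pair i j = pair (σ'.symm q) p by rw [hi, hj]), hi]
      · have hne : q ≠ σ' i := fun h => hi (by rw [h, Equiv.symm_apply_apply])
        rw [if_neg hne, if_neg (fun h : pair i j = pair (σ'.symm q) p => hi (pair_inj h).1)]
    · rw [if_neg hj, if_neg hj, theta_add,
        if_neg (fun h : pair i j = pair (σ'.symm q) p => hj (pair_inj h).2)]

theorem nMap_add_nMap_ne (p q p' q' : Fin n) (σ σ' : Equiv.Perm (Fin n)) (hpp : p ≠ p') :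
    nMap p q σ + nMap p' q' σ' = xi (theta n) := by
  funext a
  show nMap p q σ a + nMap p' q' σ' a = theta n
  rcases brandt_cases a with rfl | ⟨i, j, rfl⟩
  · rw [nMap_apply_theta, theta_add]
  · rw [nMap_apply_pair, nMap_apply_pair]
    by_cases hj : j = p
    · rw [if_pos hj, if_neg (fun h : j = p' => hpp (hj ▸ h ▸ rfl)), add_theta]
    · rw [if_neg hj, theta_add]

theorem classP_add {f g : MB n} (hf : ClassP f) (hg : ClassP g) : ClassP (f + g) := by
  rcases hf with ⟨c, rfl⟩ | ⟨p, q, σ, rfl⟩ | ⟨k, l, p, q, rfl⟩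
  · rcases hg with ⟨d, rfl⟩ | ⟨p, q, σ, rfl⟩ | ⟨k, l, p, q, rfl⟩
    · exact Or.inl ⟨c + d, xi_add_xi c d⟩
    · rcases brandt_cases c with rfl | ⟨k, l, rfl⟩
      · rw [xi_theta_add]; exact Or.inl ⟨_, rfl⟩
      · rw [xi_pair_add_nMap]; exact classP_sMap _ _ _
    · rw [add_sMap]; exact classP_sMap _ _ _
  · rcases hg with ⟨d, rfl⟩ | ⟨p', q', σ', rfl⟩ | ⟨k, l, p', q', rfl⟩
    · rcases brandt_cases d with rfl | ⟨k, l, rfl⟩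
      · rw [add_xi_theta]; exact Or.inl ⟨_, rfl⟩
      · by_cases hk : k = q
        · subst hk; rw [nMap_add_xi_pair_eq]; exact Or.inr (Or.inl ⟨_, _, _, rfl⟩)
        · rw [nMap_add_xi_pair_ne _ _ _ _ _ hk]; exact Or.inl ⟨_, rfl⟩
    · by_cases hpp : p = p'
      · subst hpp; rw [nMap_add_nMap_same]; exact classP_sMap _ _ _
      · rw [nMap_add_nMap_ne _ _ _ _ _ _ hpp]; exact Or.inl ⟨_, rfl⟩
    · rw [add_sMap]; exact classP_sMap _ _ _
  · rw [sMap_add]; exact classP_sMap _ _ _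

end Class

section AplusEq
open Brandt
variable {n : ℕ}

/-- `ClassP` as an additive subsemigroup. -/
def classPSub (n : ℕ) : AddSubsemigroup (MB n) where
  carrier := {f | ClassP f}
  add_mem' := classP_add

theorem affine_xi (c : Brandt n) : IsAffine (xi c) := by
  rcases brandt_cases c with rfl | ⟨p, q, rfl⟩
  · exact ⟨fun _ => theta n, theta n, fun a b => rfl, rfl⟩
  · refine ⟨xi (pair p p), pair p q, ?_, ?_⟩
    · intro a b
      show pair p p = pair p p + pair p p
      rw [pair_add_pair, if_pos rfl]
    · funext a
      show pair p q = pair p p + pair p q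
      rw [pair_add_pair, if_pos rfl]

theorem affine_nMap (p q : Fin n) (σ : Equiv.Perm (Fin n)) : IsAffine (nMap p q σ) := by
  refine ⟨fun a => Option.elim (α := Fin n × Fin n) a (theta n)
      (fun x => pair (σ x.1) (σ x.2)), pair (σ p) q, ?_, ?_⟩
  · intro a b
    rcases brandt_cases a with rfl | ⟨i, j, rfl⟩
    · rw [theta_add]; exact (theta_add _).symm
    · rcases brandt_cases b with rfl | ⟨k, l, rfl⟩
      · rw [add_theta]
        show theta n = _ + theta n
        rw [add_theta]
      · show Option.elim (pair i j + pair k l) _ _ = pair (σ i) (σ j) + pair (σ k) (σ l)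
        rw [pair_add_pair, pair_add_pair]
        by_cases hjk : j = k
        · rw [if_pos hjk, if_pos (by rw [hjk])]
          rfl
        · rw [if_neg hjk, if_neg (fun h => hjk (σ.injective h))]
          rfl
  · funext a
    rcases brandt_cases a with rfl | ⟨i, j, rfl⟩
    · show theta n = theta n + _
      rw [theta_add]
    · show nMap p q σ (pair i j) = pair (σ i) (σ j) + pair (σ p) q
      rw [nMap_apply_pair, pair_add_pair]
      by_cases hj : j = p
      · rw [if_pos hj, if_pos (by rw [hj])]
      · rw [if_neg hj, if_neg (fun h => hj (σ.injective h))]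

theorem mem_aplus_of_classP {f : MB n} (hf : ClassP f) : f ∈ AplusSet n := by
  have hxi : ∀ c : Brandt n, xi c ∈ Aplus n :=
    fun c => AddSubsemigroup.subset_closure (affine_xi c)
  have hnm : ∀ (p q : Fin n) (σ : Equiv.Perm (Fin n)), nMap p q σ ∈ Aplus n :=
    fun p q σ => AddSubsemigroup.subset_closure (affine_nMap p q σ)
  rcases hf with ⟨c, rfl⟩ | ⟨p, q, σ, rfl⟩ | ⟨k, l, p, q, rfl⟩
  · exact hxi c
  · exact hnm p q σ
  · have heq : sMap k l (pair p q) = xi (pair p k) + nMap l q 1 := by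
      rw [xi_pair_add_nMap]
      rfl
    rw [heq]
    exact AddSubsemigroup.add_mem _ (hxi _) (hnm _ _ _)

theorem classP_of_mem_aplus {f : MB n} (hf : f ∈ AplusSet n) : ClassP f := by
  have hle : Aplus n ≤ classPSub n := by
    rw [Aplus, AddSubsemigroup.closure_le]
    intro f hf
    rcases affine_class f hf with ⟨c, rfl⟩ | ⟨p, q, σ, rfl⟩
    · exact Or.inl ⟨c, rfl⟩
    · exact Or.inr (Or.inl ⟨p, q, σ, rfl⟩)
  exact hle hf

theorem mem_aplus_iff {f : MB n} : f ∈ AplusSet n ↔ ClassP f :=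
  ⟨classP_of_mem_aplus, mem_aplus_of_classP⟩

end AplusEq

section Supp
open Brandt
variable {n : ℕ}

theorem card_brandt : Fintype.card (Brandt n) = n ^ 2 + 1 := by
  show Fintype.card (Option (Fin n × Fin n)) = n ^ 2 + 1
  rw [Fintype.card_option, Fintype.card_prod, Fintype.card_fin]
  ring

theorem supp_xi_theta : supp (xi (theta n)) = ∅ := by
  ext a; simp [supp, xi]

theorem supp_xi_pair (p q : Fin n) : supp (xi (pair p q)) = Set.univ := by
  ext a; simp [supp, xi]
  exact pair_ne_theta p q

theorem ncard_supp_xi_theta : (supp (xi (theta n))).ncard = 0 := by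
  rw [supp_xi_theta]; simp

theorem ncard_supp_xi_pair (p q : Fin n) : (supp (xi (pair p q))).ncard = n ^ 2 + 1 := by
  rw [supp_xi_pair, Set.ncard_univ, Nat.card_eq_fintype_card, card_brandt]

theorem supp_nMap (p q : Fin n) (σ : Equiv.Perm (Fin n)) :
    supp (nMap p q σ) = (fun i : Fin n => pair i p) '' Set.univ := by
  ext a
  simp only [supp, Set.mem_setOf_eq, Set.image_univ, Set.mem_range]
  constructor
  · intro ha
    rcases brandt_cases a with rfl | ⟨i, j, rfl⟩
    · exact absurd (nMap_apply_theta p q σ) ha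
    · rw [nMap_apply_pair] at ha
      by_cases hj : j = p
      · exact ⟨i, by rw [hj]⟩
      · rw [if_neg hj] at ha; exact absurd rfl ha
  · rintro ⟨i, rfl⟩
    rw [nMap_apply_pair, if_pos rfl]
    exact pair_ne_theta _ _

theorem ncard_supp_nMap (p q : Fin n) (σ : Equiv.Perm (Fin n)) :
    (supp (nMap p q σ)).ncard = n := by
  rw [supp_nMap, Set.ncard_image_of_injective _ (fun a b h => (pair_inj h).1),
    Set.ncard_univ, Nat.card_eq_fintype_card, Fintype.card_fin]

theorem supp_sMap_pair (k l p q : Fin n) : supp (sMap k l (pair p q)) = {pair k l} := by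
  ext a
  simp only [supp, Set.mem_setOf_eq, Set.mem_singleton_iff, sMap_apply]
  by_cases ha : a = pair k l
  · simp [ha, pair_ne_theta]
  · simp [ha]

theorem ncard_supp_sMap_pair (k l p q : Fin n) :
    (supp (sMap k l (pair p q))).ncard = 1 := by
  rw [supp_sMap_pair, Set.ncard_singleton]

theorem nMap_inj {p q p' q' : Fin n} {σ σ' : Equiv.Perm (Fin n)}
    (h : nMap p q σ = nMap p' q' σ') : p = p' ∧ q = q' ∧ σ = σ' := by
  have hp : p = p' := by
    have h1 := congrFun h (pair p p)
    rw [nMap_apply_pair, nMap_apply_pair, if_pos rfl] at h1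
    by_cases hpp : p = p'
    · exact hpp
    · rw [if_neg hpp] at h1; exact absurd h1 (pair_ne_theta _ _)
  subst hp
  have hvals : ∀ i : Fin n, pair (σ i) q = pair (σ' i) q' := by
    intro i
    have h1 := congrFun h (pair i p)
    rw [nMap_apply_pair, nMap_apply_pair, if_pos rfl, if_pos rfl] at h1
    exact h1
  refine ⟨rfl, (pair_inj (hvals p)).2, Equiv.ext fun i => (pair_inj (hvals i)).1⟩

theorem nsq_facts (hn : 2 ≤ n) : n + 1 ≤ n ^ 2 ∧ 2 ≤ n ^ 2 := by
  constructor <;> nlinarith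

/-- Shape from support cardinality, for members of `A⁺`. -/
theorem shape_full (hn : 2 ≤ n) {f : MB n} (hf : f ∈ AplusSet n)
    (hc : (supp f).ncard = n ^ 2 + 1) : ∃ p q, f = xi (pair p q) := by
  obtain ⟨h1, h2⟩ := nsq_facts hn
  rcases mem_aplus_iff.mp hf with ⟨c, rfl⟩ | ⟨p, q, σ, rfl⟩ | ⟨k, l, p, q, rfl⟩
  · rcases brandt_cases c with rfl | ⟨p, q, rfl⟩
    · rw [ncard_supp_xi_theta] at hc; omega
    · exact ⟨p, q, rfl⟩
  · rw [ncard_supp_nMap] at hc; omega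
  · rw [ncard_supp_sMap_pair] at hc; omega

theorem shape_n (hn : 2 ≤ n) {f : MB n} (hf : f ∈ AplusSet n)
    (hc : (supp f).ncard = n) : ∃ p q σ, f = nMap p q σ := by
  obtain ⟨h1, h2⟩ := nsq_facts hn
  rcases mem_aplus_iff.mp hf with ⟨c, rfl⟩ | ⟨p, q, σ, rfl⟩ | ⟨k, l, p, q, rfl⟩
  · rcases brandt_cases c with rfl | ⟨p, q, rfl⟩
    · rw [ncard_supp_xi_theta] at hc; omega
    · rw [ncard_supp_xi_pair] at hc; omega
  · exact ⟨p, q, σ, rfl⟩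
  · rw [ncard_supp_sMap_pair] at hc; omega

theorem shape_one (hn : 2 ≤ n) {f : MB n} (hf : f ∈ AplusSet n)
    (hc : (supp f).ncard = 1) : ∃ k l p q, f = sMap k l (pair p q) := by
  obtain ⟨h1, h2⟩ := nsq_facts hn
  rcases mem_aplus_iff.mp hf with ⟨c, rfl⟩ | ⟨p, q, σ, rfl⟩ | ⟨k, l, p, q, rfl⟩
  · rcases brandt_cases c with rfl | ⟨p, q, rfl⟩
    · rw [ncard_supp_xi_theta] at hc; omega
    · rw [ncard_supp_xi_pair] at hc; omega
  · rw [ncard_supp_nMap] at hc; omega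
  · exact ⟨k, l, p, q, rfl⟩

end Supp

section Words
open Brandt Relation
variable {n : ℕ}

theorem add_eq_pair {a b : Brandt n} {p q : Fin n} (h : a + b = pair p q) :
    ∃ r, a = pair p r ∧ b = pair r q := by
  rcases brandt_cases a with rfl | ⟨i, j, rfl⟩
  · rw [theta_add] at h; exact absurd h.symm (pair_ne_theta _ _)
  · rcases brandt_cases b with rfl | ⟨k, l, rfl⟩
    · rw [add_theta] at h; exact absurd h.symm (pair_ne_theta _ _)
    · rw [pair_add_pair] at h
      by_cases hjk : j = k
      · rw [if_pos hjk] at h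
        obtain ⟨h1, h2⟩ := pair_inj h
        exact ⟨j, by rw [h1], by rw [hjk, h2]⟩
      · rw [if_neg hjk] at h; exact absurd h.symm (pair_ne_theta _ _)

/-- Walks in the "constant maps graph" give constants in the closure. -/
theorem xi_mem_closure_of_transGen {X : Set (MB n)} {p q : Fin n}
    (h : TransGen (fun a b : Fin n => xi (pair a b) ∈ X) p q) :
    xi (pair p q) ∈ AddSubsemigroup.closure X := by
  induction h with
  | single hedge => exact AddSubsemigroup.subset_closure hedge
  | @tail b c hpb hedge ih =>
      have heq : xi (pair p b) + xi (pair b c) = xi (pair p c) := by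
        rw [xi_add_xi, pair_add_pair_same]
      exact heq ▸ AddSubsemigroup.add_mem _ ih (AddSubsemigroup.subset_closure hedge)

/-- Constants in the closure give walks. -/
theorem transGen_of_xi_mem_closure {X : Set (MB n)} (hXA : X ⊆ AplusSet n)
    {f : MB n} (hf : f ∈ AddSubsemigroup.closure X) :
    ∀ p q : Fin n, f = xi (pair p q) → TransGen (fun a b : Fin n => xi (pair a b) ∈ X) p q := by
  have hXc : AddSubsemigroup.closure X ≤ Aplus n := AddSubsemigroup.closure_le.mpr hXA
  induction hf using AddSubsemigroup.closure_induction with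
  | mem x hx =>
      intro p q hxe
      exact TransGen.single (hxe ▸ hx)
  | add x y hx hy ihx ihy =>
      intro p q hxy
      have hshape : ∀ z : MB n, z ∈ AddSubsemigroup.closure X → z (theta n) ≠ theta n →
          ∃ k l, z = xi (pair k l) := by
        intro z hz hzθ
        rcases classP_of_mem_aplus (hXc hz) with ⟨c, rfl⟩ | ⟨p', q', σ', rfl⟩ | ⟨k, l, p', q', rfl⟩
        · rcases brandt_cases c with rfl | ⟨k, l, rfl⟩
          · exact absurd rfl hzθ
          · exact ⟨k, l, rfl⟩
        · exact absurd (nMap_apply_theta _ _ _) hzθ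
        · rw [sMap_apply, if_neg (fun h : theta n = pair k l => pair_ne_theta _ _ h.symm)] at hzθ
          exact absurd rfl hzθ
      have hθ : x (theta n) + y (theta n) = pair p q := by
        have := congrFun hxy (theta n); exact this
      have hxθ : x (theta n) ≠ theta n := by
        intro hc; rw [hc, theta_add] at hθ; exact pair_ne_theta _ _ hθ.symm
      have hyθ : y (theta n) ≠ theta n := by
        intro hc; rw [hc, add_theta] at hθ; exact pair_ne_theta _ _ hθ.symm
      obtain ⟨k, l, rfl⟩ := hshape x hx hxθ
      obtain ⟨k', l', rfl⟩ := hshape y hy hyθ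
      have hsum : pair k l + pair k' l' = pair p q := xi_inj (by rw [← xi_add_xi, hxy])
      obtain ⟨r, h1, h2⟩ := add_eq_pair hsum
      obtain ⟨hk, hl⟩ := pair_inj h1
      obtain ⟨hk', hl'⟩ := pair_inj h2
      exact TransGen.trans (ihx p r (by rw [hk, hl])) (ihy r q (by rw [hk', hl']))

/-- Decomposition of `n`-support maps. -/
theorem nMap_decomp (p r q : Fin n) (σ : Equiv.Perm (Fin n)) :
    nMap p q σ = nMap p r σ + xi (pair r q) :=
  (nMap_add_xi_pair_eq p r q σ).symm

/-- Any word representing an `n`-support map starts with an `n`-support letter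
with the same `p` and `σ`. -/
theorem nMap_head (hn : 2 ≤ n) {X : Set (MB n)} (hXA : X ⊆ AplusSet n)
    {f : MB n} (hf : f ∈ AddSubsemigroup.closure X) :
    ∀ p q σ, f = nMap p q σ → ∃ r, nMap p r σ ∈ X := by
  have hXc : AddSubsemigroup.closure X ≤ Aplus n := AddSubsemigroup.closure_le.mpr hXA
  have i0 : Fin n := ⟨0, by omega⟩
  have i1 : Fin n := ⟨1, by omega⟩
  induction hf using AddSubsemigroup.closure_induction with
  | mem x hx => intro p q σ hxe; exact ⟨q, hxe ▸ hx⟩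
  | add x y hx hy ihx ihy =>
      intro p q σ hxy
      have i0 : Fin n := ⟨0, by omega⟩
      have i1 : Fin n := ⟨1, by omega⟩
      have hval : ∀ i : Fin n, x (pair i p) + y (pair i p) = pair (σ i) q := by
        intro i
        have := congrFun hxy (pair i p)
        rw [nMap_apply_pair, if_pos rfl] at this
        exact this
      have hxv : ∀ i : Fin n, ∃ r, x (pair i p) = pair (σ i) r :=
        fun i => ⟨(add_eq_pair (hval i)).choose, (add_eq_pair (hval i)).choose_spec.1⟩
      rcases classP_of_mem_aplus (hXc hx) with ⟨c, rfl⟩ | ⟨p', q', σ', rfl⟩ | ⟨k, l, p', q', rfl⟩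
      · -- x constant: impossible since σ not constant
        exfalso
        obtain ⟨r0, h0⟩ := hxv ⟨0, by omega⟩
        obtain ⟨r1, h1⟩ := hxv ⟨1, by omega⟩
        rw [xi_apply] at h0 h1
        have : σ ⟨0, by omega⟩ = σ ⟨1, by omega⟩ := by
          have := h0.symm.trans h1
          exact ((pair_inj this).1)
        have h01 := σ.injective this
        simpa using congrArg Fin.val h01
      · -- x is an n-support map
        have hp' : p' = p := by
          by_contra hne
          obtain ⟨r0, h0⟩ := hxv ⟨0, by omega⟩
          rw [nMap_apply_pair, if_neg (fun h => hne h.symm)] at h0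
          exact pair_ne_theta _ _ h0.symm
        subst hp'
        have hσ : σ' = σ := by
          refine Equiv.ext fun i => ?_
          obtain ⟨r, hr⟩ := hxv i
          rw [nMap_apply_pair, if_pos rfl] at hr
          exact (pair_inj hr).1
        subst hσ
        exact ihx p' q' σ' rfl
      · -- x singleton support: impossible
        exfalso
        have hne01 : (⟨0, by omega⟩ : Fin n) ≠ ⟨1, by omega⟩ := by
          intro h; simpa using congrArg Fin.val h
        obtain ⟨r0, h0⟩ := hxv ⟨0, by omega⟩
        obtain ⟨r1, h1⟩ := hxv ⟨1, by omega⟩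
        rw [sMap_apply] at h0 h1
        by_cases hc0 : pair (⟨0, by omega⟩ : Fin n) p = pair k l
        · by_cases hc1 : pair (⟨1, by omega⟩ : Fin n) p = pair k l
          · exact hne01 ((pair_inj (hc0.trans hc1.symm)).1)
          · rw [if_neg hc1] at h1; exact pair_ne_theta _ _ h1.symm
        · rw [if_neg hc0] at h0; exact pair_ne_theta _ _ h0.symm

/-- Strip loops from a walk. -/
theorem reflTransGen_strip {r : Fin n → Fin n → Prop} {a b : Fin n}
    (h : TransGen r a b) :
    ReflTransGen (fun a b : Fin n => a ≠ b ∧ r a b) a b := by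
  induction h with
  | @single c hedge =>
      rcases eq_or_ne a c with rfl | hne
      · exact ReflTransGen.refl
      · exact ReflTransGen.single ⟨hne, hedge⟩
  | @tail b c hpb hedge ih =>
      rcases eq_or_ne b c with rfl | hne
      · exact ih
      · exact ih.tail ⟨hne, hedge⟩

theorem transGen_strip {r : Fin n → Fin n → Prop} {a b : Fin n}
    (h : TransGen r a b) (hne : a ≠ b) :
    TransGen (fun a b : Fin n => a ≠ b ∧ r a b) a b := by
  rcases reflTransGen_iff_eq_or_transGen.mp (reflTransGen_strip h) with rfl | h'
  · exact absurd rfl hne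
  · exact h'

end Words

section Graph
open Relation
variable {n : ℕ}

/-- The deleted relation: edges of `rel` other than `e`. -/
def relDel (rel : Fin n → Fin n → Prop) (e : Fin n × Fin n) : Fin n → Fin n → Prop :=
  fun a b => rel a b ∧ (a, b) ≠ e

/-- Critical edges for out-reachability from `r₀`. -/
def Acrit (rel : Fin n → Fin n → Prop) (r₀ : Fin n) : Set (Fin n × Fin n) :=
  {e | rel e.1 e.2 ∧ ∃ x, ¬ ReflTransGen (relDel rel e) r₀ x}

theorem walk_split {rel : Fin n → Fin n → Prop} (e : Fin n × Fin n) {a x : Fin n}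
    (h : ReflTransGen rel a x) :
    ReflTransGen (relDel rel e) a x ∨ ReflTransGen (relDel rel e) e.2 x := by
  induction h using ReflTransGen.head_induction_on with
  | refl => exact Or.inl ReflTransGen.refl
  | @head a c hac hcx ih =>
      by_cases he : (a, c) = e
      · rcases ih with ih | ih
        · exact Or.inr (by rw [← (show c = e.2 from congrArg Prod.snd he)]; exact ih)
        · exact Or.inr ih
      · rcases ih with ih | ih
        · exact Or.inl (ReflTransGen.head ⟨hac, he⟩ ih)
        · exact Or.inr ih

theorem walk_split2 {rel : Fin n → Fin n → Prop} {e f : Fin n × Fin n} {q : Fin n}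
    (he : rel e.1 e.2) (hf : rel f.1 f.2) (heq : e.2 = q) (hfq : f.2 = q) (hef : e ≠ f)
    {a : Fin n} (h : ReflTransGen rel a q) :
    ReflTransGen (relDel rel e) a q ∨ ReflTransGen (relDel rel f) a q := by
  induction h using ReflTransGen.head_induction_on with
  | refl => exact Or.inl ReflTransGen.refl
  | @head a c hac hcx ih =>
      by_cases hee : (a, c) = e
      · right
        have ha : a = e.1 := congrArg Prod.fst hee
        have haq : (a, q) = e := by rw [ha, ← heq]
        refine ReflTransGen.single ?_
        refine ⟨?_, fun hcon => hef (haq.symm.trans hcon)⟩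
        rw [ha, ← heq] at *
        exact he
      · by_cases hff : (a, c) = f
        · left
          have ha : a = f.1 := congrArg Prod.fst hff
          have haq : (a, q) = f := by rw [ha, ← hfq]
          refine ReflTransGen.single ?_
          refine ⟨?_, fun hcon => hef (hcon.symm.trans haq)⟩
          rw [ha, ← hfq] at *
          exact hf
        · rcases ih with ih | ih
          · exact Or.inl (ReflTransGen.head ⟨hac, hee⟩ ih)
          · exact Or.inr (ReflTransGen.head ⟨hac, hff⟩ ih)

theorem acrit_star {rel : Fin n → Fin n → Prop} {r₀ : Fin n}
    (hGen : ∀ p q, TransGen rel p q) {e : Fin n × Fin n} (he : e ∈ Acrit rel r₀) :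
    ¬ ReflTransGen (relDel rel e) r₀ e.2 := by
  intro hr
  obtain ⟨_, x, hx⟩ := he
  rcases walk_split e (hGen r₀ x).to_reflTransGen with h | h
  · exact hx h
  · exact hx (hr.trans h)

theorem acrit_snd_injOn {rel : Fin n → Fin n → Prop} {r₀ : Fin n}
    (hGen : ∀ p q, TransGen rel p q) :
    Set.InjOn Prod.snd (Acrit rel r₀) := by
  intro e he f hf hef
  by_contra hne
  rcases walk_split2 he.1 hf.1 rfl hef.symm hne (hGen r₀ e.2).to_reflTransGen with h | h
  · exact acrit_star hGen he h
  · exact acrit_star hGen hf (hef ▸ h)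

theorem acrit_snd_ne {rel : Fin n → Fin n → Prop} {r₀ : Fin n}
    (hGen : ∀ p q, TransGen rel p q) {e : Fin n × Fin n} (he : e ∈ Acrit rel r₀) :
    e.2 ≠ r₀ := by
  intro h
  exact acrit_star hGen he (h ▸ ReflTransGen.refl)

theorem acrit_ncard_le (hn : 1 ≤ n) {rel : Fin n → Fin n → Prop} {r₀ : Fin n}
    (hGen : ∀ p q, TransGen rel p q) :
    (Acrit rel r₀).ncard ≤ n - 1 := by
  have h1 : (Acrit rel r₀).ncard = (Prod.snd '' Acrit rel r₀).ncard :=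
    (Set.ncard_image_of_injOn (acrit_snd_injOn hGen)).symm
  have h2 : Prod.snd '' Acrit rel r₀ ⊆ Set.univ \ {r₀} := by
    rintro x ⟨e, he, rfl⟩
    exact ⟨Set.mem_univ _, acrit_snd_ne hGen he⟩
  have h3 : (Set.univ \ {r₀} : Set (Fin n)).ncard = n - 1 := by
    rw [Set.ncard_diff_singleton_of_mem (Set.mem_univ r₀), Set.ncard_univ,
      Nat.card_eq_fintype_card, Fintype.card_fin]
  rw [h1, ← h3]
  exact Set.ncard_le_ncard h2 ((Set.univ \ {r₀}).toFinite)

/-- The key bound: an independent strongly generating loop-free edge set has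
at most `2n - 2` edges. -/
theorem edge_bound (hn : 2 ≤ n) {rel : Fin n → Fin n → Prop}
    (hGen : ∀ p q, TransGen rel p q)
    (hNL : ∀ p, ¬ rel p p)
    (hInd : ∀ e : Fin n × Fin n, rel e.1 e.2 → ¬ TransGen (relDel rel e) e.1 e.2) :
    {e : Fin n × Fin n | rel e.1 e.2}.ncard ≤ 2 * n - 2 := by
  set r₀ : Fin n := ⟨0, by omega⟩ with hr₀
  have hGenF : ∀ p q, TransGen (Function.swap rel) p q := fun p q => transGen_swap.mpr (hGen q p)
  have hcover : {e : Fin n × Fin n | rel e.1 e.2} ⊆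
      Acrit rel r₀ ∪ Prod.swap '' Acrit (Function.swap rel) r₀ := by
    intro e he
    by_cases hA : e ∈ Acrit rel r₀
    · exact Or.inl hA
    by_cases hB : e ∈ Prod.swap '' Acrit (Function.swap rel) r₀
    · exact Or.inr hB
    exfalso
    have hA' : ∀ x, ReflTransGen (relDel rel e) r₀ x := by
      by_contra hx; push_neg at hx
      exact hA ⟨he, hx⟩
    have hB' : ∀ x, ReflTransGen (relDel rel e) x r₀ := by
      have hswap : e.swap ∉ Acrit (Function.swap rel) r₀ := by
        intro hmem
        exact hB ⟨e.swap, hmem, Prod.swap_swap e⟩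
      have : ∀ x, ReflTransGen (relDel (Function.swap rel) e.swap) r₀ x := by
        by_contra hx; push_neg at hx
        exact hswap ⟨he, hx⟩
      intro x
      have hx := this x
      have hrel : ∀ a b, relDel (Function.swap rel) e.swap a b → Function.swap (relDel rel e) a b := by
        intro a b h
        obtain ⟨h1, h2⟩ := h
        exact ⟨h1, fun hc => h2 (congrArg Prod.swap hc)⟩
      have hx' : ReflTransGen (Function.swap (relDel rel e)) r₀ x :=
        ReflTransGen.mono hrel _ _ hx
      exact reflTransGen_swap.mp hx'
    have he' : rel e.1 e.2 := he
    have hwalk : ReflTransGen (relDel rel e) e.1 e.2 := (hB' e.1).trans (hA' e.2)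
    have hne : e.1 ≠ e.2 := fun h => hNL e.2 (by rw [h] at he'; exact he')
    rcases reflTransGen_iff_eq_or_transGen.mp hwalk with h | h
    · exact hne h.symm
    · exact hInd e he' h
  calc {e : Fin n × Fin n | rel e.1 e.2}.ncard
      ≤ (Acrit rel r₀ ∪ Prod.swap '' Acrit (Function.swap rel) r₀).ncard :=
        Set.ncard_le_ncard hcover (Set.toFinite _)
    _ ≤ (Acrit rel r₀).ncard + (Prod.swap '' Acrit (Function.swap rel) r₀).ncard :=
        Set.ncard_union_le _ _
    _ ≤ (n - 1) + (n - 1) := by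
        refine Nat.add_le_add (acrit_ncard_le (by omega) hGen) ?_
        rw [Set.ncard_image_of_injective _ Prod.swap_injective]
        exact acrit_ncard_le (by omega) hGenF
    _ ≤ 2 * n - 2 := by omega

end Graph

theorem transGen_first {α : Type*} {r : α → α → Prop} {a b : α}
    (h : Relation.TransGen r a b) : ∃ c, r a c := by
  induction h with
  | single h => exact ⟨_, h⟩
  | tail _ _ ih => exact ih

section Main
open Brandt Relation

/-- For `n ≥ 2` and any independent generating set `U` of
`A⁺(Bₙ)`: (1) `U` contains no singleton support element; (2) `U` contains
exactly `n·(n!)` elements of `n`-support; (3) the number of full support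
elements of `U` lies between `n` and `2n - 2`. Consequently
`|U| ≤ n·(n!) + 2n − 2`. -/
theorem stmt_8 (n : ℕ) (hn : 2 ≤ n) (U : Set (MB n)) (hU : U ⊆ AplusSet n)
    (hgen : (AddSubsemigroup.closure U : Set (MB n)) = AplusSet n)
    (hind : IndepSet U) :
    supportPart (AplusSet n) 1 ∩ U = ∅ ∧
    (supportPart (AplusSet n) n ∩ U).ncard = n * n.factorial ∧
    (n ≤ (supportPart (AplusSet n) (n ^ 2 + 1) ∩ U).ncard ∧
      (supportPart (AplusSet n) (n ^ 2 + 1) ∩ U).ncard ≤ 2 * n - 2) ∧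
    U.ncard ≤ n * n.factorial + 2 * n - 2 := by
  obtain ⟨hsq1, hsq2⟩ := nsq_facts hn
  have hmem : ∀ f : MB n, ClassP f → f ∈ AddSubsemigroup.closure U := by
    intro f hf
    have h1 : f ∈ AplusSet n := mem_aplus_of_classP hf
    rw [← hgen] at h1
    exact h1
  set rel : Fin n → Fin n → Prop := fun a b => xi (pair a b) ∈ U with hrel
  -- generation of the constants graph
  have hGen : ∀ p q : Fin n, TransGen rel p q := by
    intro p q
    exact transGen_of_xi_mem_closure hU (hmem _ (Or.inl ⟨_, rfl⟩)) p q rfl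
  -- constants avoid any non-constant element
  have hconst : ∀ u : MB n, (∀ a b : Fin n, xi (pair a b) ≠ u) →
      ∀ p q : Fin n, xi (pair p q) ∈ AddSubsemigroup.closure (U \ {u}) := by
    intro u hne p q
    refine xi_mem_closure_of_transGen (TransGen.mono ?_ _ _ (hGen p q))
    intro a b hab
    exact ⟨hab, hne a b⟩
  -- xi (pair _ _) distinguished from other shapes by support cardinality
  have hxne_of_card : ∀ (u : MB n) (k : ℕ), (supp u).ncard = k → k ≠ n ^ 2 + 1 →
      ∀ a b : Fin n, xi (pair a b) ≠ u := by
    intro u k hk hkn a b h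
    rw [← h, ncard_supp_xi_pair] at hk
    exact hkn hk.symm
  -- PART 1
  have part1 : supportPart (AplusSet n) 1 ∩ U = ∅ := by
    rw [Set.eq_empty_iff_forall_notMem]
    rintro f ⟨⟨hfA, hf1⟩, hfU⟩
    obtain ⟨k, l, p, q, rfl⟩ := shape_one hn hfA hf1
    set u : MB n := sMap k l (pair p q) with hu
    have hxne : ∀ a b : Fin n, xi (pair a b) ≠ u :=
      hxne_of_card u 1 (ncard_supp_sMap_pair k l p q) (by omega)
    obtain ⟨r, hr⟩ := nMap_head hn hU (hmem _ (Or.inr (Or.inl ⟨l, q, 1, rfl⟩))) l q 1 rfl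
    have hne2 : nMap l r 1 ≠ u := by
      intro h
      have := congrArg (fun f => (supp f).ncard) h
      simp only [ncard_supp_nMap, hu, ncard_supp_sMap_pair] at this
      omega
    have mem2 : nMap l q 1 ∈ AddSubsemigroup.closure (U \ {u}) := by
      rw [nMap_decomp l r q 1]
      exact AddSubsemigroup.add_mem _ (AddSubsemigroup.subset_closure ⟨hr, hne2⟩)
        (hconst u hxne r q)
    have mem1 : xi (pair p k) ∈ AddSubsemigroup.closure (U \ {u}) := hconst u hxne p k
    have heq : xi (pair p k) + nMap l q 1 = u := by
      rw [xi_pair_add_nMap]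
      simp [hu]
      rfl
    have hsum : xi (pair p k) + nMap l q 1 ∈ AddSubsemigroup.closure (U \ {u}) :=
      AddSubsemigroup.add_mem _ mem1 mem2
    rw [heq] at hsum
    exact hind u hfU hsum
  -- uniqueness of n-support elements of U per (p, σ)
  have huniq : ∀ (p : Fin n) (σ : Equiv.Perm (Fin n)) (r r' : Fin n),
      nMap p r σ ∈ U → nMap p r' σ ∈ U → r = r' := by
    intro p σ r r' h1 h2
    by_contra hne
    set u' : MB n := nMap p r' σ with hu'
    have hxne : ∀ a b : Fin n, xi (pair a b) ≠ u' :=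
      hxne_of_card u' n (ncard_supp_nMap p r' σ) (by omega)
    have hne1 : nMap p r σ ≠ u' := fun h => hne (nMap_inj h).2.1
    have hm : nMap p r σ + xi (pair r r') ∈ AddSubsemigroup.closure (U \ {u'}) :=
      AddSubsemigroup.add_mem _ (AddSubsemigroup.subset_closure ⟨h1, hne1⟩)
        (hconst u' hxne r r')
    rw [← nMap_decomp p r r' σ] at hm
    exact hind u' h2 hm
  have hex : ∀ (p : Fin n) (σ : Equiv.Perm (Fin n)), ∃ r, nMap p r σ ∈ U :=
    fun p σ => nMap_head hn hU (hmem _ (Or.inr (Or.inl ⟨p, p, σ, rfl⟩))) p p σ rfl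
  -- PART 2
  set G : Fin n × Equiv.Perm (Fin n) → MB n :=
    fun x => nMap x.1 (hex x.1 x.2).choose x.2 with hG
  have hGU : ∀ x, G x ∈ U := fun x => (hex x.1 x.2).choose_spec
  have hNset : supportPart (AplusSet n) n ∩ U = Set.range G := by
    ext f
    constructor
    · rintro ⟨⟨hfA, hfn⟩, hfU⟩
      obtain ⟨p, q, σ, rfl⟩ := shape_n hn hfA hfn
      refine ⟨(p, σ), ?_⟩
      have : (hex p σ).choose = q := huniq p σ _ q (hGU (p, σ)) hfU
      rw [hG]
      simp only
      rw [this]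
    · rintro ⟨x, rfl⟩
      exact ⟨⟨hU (hGU x), ncard_supp_nMap _ _ _⟩, hGU x⟩
  have hGinj : Function.Injective G := by
    intro x y h
    obtain ⟨h1, h2, h3⟩ := nMap_inj h
    exact Prod.ext h1 h3
  have part2 : (supportPart (AplusSet n) n ∩ U).ncard = n * n.factorial := by
    rw [hNset, ← Set.image_univ, Set.ncard_image_of_injective _ hGinj, Set.ncard_univ,
      Nat.card_eq_fintype_card, Fintype.card_prod, Fintype.card_fin, Fintype.card_perm,
      Fintype.card_fin]
  -- no loops
  have hNL : ∀ p : Fin n, ¬ rel p p := by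
    intro p hpp
    have hne01 : ((⟨0, by omega⟩ : Fin n)) ≠ ⟨1, by omega⟩ := by
      intro h; simpa using congrArg Fin.val h
    obtain ⟨q, hq⟩ : ∃ q : Fin n, q ≠ p := by
      rcases eq_or_ne (⟨0, by omega⟩ : Fin n) p with rfl | h
      · exact ⟨⟨1, by omega⟩, fun h => hne01 h.symm⟩
      · exact ⟨⟨0, by omega⟩, h⟩
    have t1 := transGen_strip (hGen p q) (fun h => hq h.symm)
    have t2 := transGen_strip (hGen q p) hq
    have t3 : TransGen (fun a b : Fin n => a ≠ b ∧ rel a b) p p := t1.trans t2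
    have t4 : xi (pair p p) ∈ AddSubsemigroup.closure (U \ {xi (pair p p)}) := by
      refine xi_mem_closure_of_transGen (TransGen.mono ?_ _ _ t3)
      rintro a b ⟨hab, hmem'⟩
      refine ⟨hmem', fun hc => hab ?_⟩
      obtain ⟨h1, h2⟩ := pair_inj (xi_inj hc)
      rw [h1, h2]
    exact hind _ hpp t4
  -- independence of edges
  have hIndE : ∀ e : Fin n × Fin n, rel e.1 e.2 → ¬ TransGen (relDel rel e) e.1 e.2 := by
    intro e he ht
    have t4 : xi (pair e.1 e.2) ∈ AddSubsemigroup.closure (U \ {xi (pair e.1 e.2)}) := by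
      refine xi_mem_closure_of_transGen (TransGen.mono ?_ _ _ ht)
      rintro a b ⟨hmem', hab⟩
      refine ⟨hmem', fun hc => hab ?_⟩
      obtain ⟨h1, h2⟩ := pair_inj (xi_inj hc)
      rw [h1, h2]
    exact hind _ he t4
  -- PART 3
  have hFull : supportPart (AplusSet n) (n ^ 2 + 1) ∩ U =
      (fun e : Fin n × Fin n => xi (pair e.1 e.2)) '' {e | rel e.1 e.2} := by
    ext f
    constructor
    · rintro ⟨⟨hfA, hfc⟩, hfU⟩
      obtain ⟨p, q, rfl⟩ := shape_full hn hfA hfc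
      exact ⟨(p, q), hfU, rfl⟩
    · rintro ⟨e, he, rfl⟩
      exact ⟨⟨hU he, ncard_supp_xi_pair _ _⟩, he⟩
  have hFcard : (supportPart (AplusSet n) (n ^ 2 + 1) ∩ U).ncard =
      {e : Fin n × Fin n | rel e.1 e.2}.ncard := by
    rw [hFull]
    refine Set.ncard_image_of_injOn ?_
    intro e _ f _ h
    obtain ⟨h1, h2⟩ := pair_inj (xi_inj h)
    exact Prod.ext h1 h2
  have hlow : n ≤ {e : Fin n × Fin n | rel e.1 e.2}.ncard := by
    have hout : ∀ p : Fin n, ∃ c, rel p c := fun p => transGen_first (hGen p p)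
    choose c hc using hout
    have himg : (fun p : Fin n => (p, c p)) '' Set.univ ⊆ {e : Fin n × Fin n | rel e.1 e.2} := by
      rintro x ⟨p, _, rfl⟩
      exact hc p
    have h1 : ((fun p : Fin n => (p, c p)) '' Set.univ).ncard = n := by
      rw [Set.ncard_image_of_injective _ (fun a b h => congrArg Prod.fst h), Set.ncard_univ,
        Nat.card_eq_fintype_card, Fintype.card_fin]
    have h2 := Set.ncard_le_ncard himg (Set.toFinite _)
    rw [h1] at h2
    exact h2
  have hhigh : {e : Fin n × Fin n | rel e.1 e.2}.ncard ≤ 2 * n - 2 :=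
    edge_bound hn hGen hNL hIndE
  have part3 : n ≤ (supportPart (AplusSet n) (n ^ 2 + 1) ∩ U).ncard ∧
      (supportPart (AplusSet n) (n ^ 2 + 1) ∩ U).ncard ≤ 2 * n - 2 := by
    rw [hFcard]
    exact ⟨hlow, hhigh⟩
  -- theta constant not in U
  have hθU : xi (theta n) ∉ U := by
    intro hmemθ
    set u : MB n := xi (theta n) with hu
    have hne01 : ((⟨0, by omega⟩ : Fin n)) ≠ ⟨1, by omega⟩ := by
      intro h; simpa using congrArg Fin.val h
    have hxne : ∀ a b : Fin n, xi (pair a b) ≠ u := by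
      intro a b h
      exact pair_ne_theta a b (xi_inj h)
    have hmemf : ∀ p : Fin n, nMap p (⟨0, by omega⟩ : Fin n) 1 ∈
        AddSubsemigroup.closure (U \ {u}) := by
      intro p
      obtain ⟨r, hr⟩ := nMap_head hn hU (hmem _ (Or.inr (Or.inl ⟨p, ⟨0, by omega⟩, 1, rfl⟩)))
        p ⟨0, by omega⟩ 1 rfl
      have hner : nMap p r 1 ≠ u := by
        intro h
        have := congrArg (fun f => (supp f).ncard) h
        simp only [ncard_supp_nMap, hu, ncard_supp_xi_theta] at this
        omega
      rw [nMap_decomp p r (⟨0, by omega⟩ : Fin n) 1]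
      exact AddSubsemigroup.add_mem _ (AddSubsemigroup.subset_closure ⟨hr, hner⟩)
        (hconst u hxne r _)
    have heq : nMap (⟨0, by omega⟩ : Fin n) (⟨0, by omega⟩ : Fin n) 1 +
        nMap (⟨1, by omega⟩ : Fin n) (⟨0, by omega⟩ : Fin n) 1 = xi (theta n) :=
      nMap_add_nMap_ne _ _ _ _ _ _ hne01
    have hsum := AddSubsemigroup.add_mem _ (hmemf (⟨0, by omega⟩ : Fin n))
      (hmemf (⟨1, by omega⟩ : Fin n))
    rw [heq] at hsum
    exact hind u hmemθ hsum
  -- decomposition of U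
  have hU_eq : U ⊆ (supportPart (AplusSet n) n ∩ U) ∪
      (supportPart (AplusSet n) (n ^ 2 + 1) ∩ U) := by
    intro u hu
    rcases classP_of_mem_aplus (hU hu) with ⟨c, rfl⟩ | ⟨p, q, σ, rfl⟩ | ⟨k, l, p, q, rfl⟩
    · rcases brandt_cases c with rfl | ⟨p, q, rfl⟩
      · exact absurd hu hθU
      · exact Or.inr ⟨⟨hU hu, ncard_supp_xi_pair _ _⟩, hu⟩
    · exact Or.inl ⟨⟨hU hu, ncard_supp_nMap _ _ _⟩, hu⟩
    · exact absurd (show sMap k l (pair p q) ∈ supportPart (AplusSet n) 1 ∩ U from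
        ⟨⟨hU hu, ncard_supp_sMap_pair _ _ _ _⟩, hu⟩) (by rw [part1]; exact fun h => h)
  have final : U.ncard ≤ n * n.factorial + 2 * n - 2 := by
    have h1 : U.ncard ≤ ((supportPart (AplusSet n) n ∩ U) ∪
        (supportPart (AplusSet n) (n ^ 2 + 1) ∩ U)).ncard :=
      Set.ncard_le_ncard hU_eq (Set.toFinite _)
    have h2 := Set.ncard_union_le (supportPart (AplusSet n) n ∩ U)
      (supportPart (AplusSet n) (n ^ 2 + 1) ∩ U)
    rw [part2] at h2
    have h3 := part3.2
    set F := n * n.factorial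
    set K := (supportPart (AplusSet n) (n ^ 2 + 1) ∩ U).ncard
    omega
  exact ⟨part1, part2, part3, final⟩

end Main
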